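/- arXiv:2204.07956 — 5 statements merged into one kernel-verified Lean document; each statement's English description precedes it below -/
import Mathlib

section
/- For observation tests (tests with trivial output), if test A = {a_i}_{i∈X} does not exclude test B = {b_j}_{j∈Y}, then there exists a single observation test {c_{ij}}_{(i,j)∈X×Y} such that a_i = Σ_j c_{ij} for all i and b_j = Σ_i c_{ij} for all j. In particular, for observation tests the relation 'A does not exclude B' already implies strong compatibility of A and B. -/
/-- The deterministic effect on the classical system ℝ^n: sum of coordinates. -/
noncomputable def detEffect (n : ℕ) : (Fin n → ℝ) →ₗ[ℝ] ℝ :=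
  ∑ i : Fin n, LinearMap.proj i

lemma detEffect_nonneg {q : ℕ} {w : Fin q → ℝ} (hw : 0 ≤ w) : 0 ≤ detEffect q w := by
  simp only [detEffect, LinearMap.sum_apply, LinearMap.proj_apply]
  exact Finset.sum_nonneg fun i _ => hw i

lemma partition_sum {X Z : Type} [Fintype X] [Fintype Z] [DecidableEq Z]
    (V : X → Finset Z)
    (hd : ∀ i i', i ≠ i' → Disjoint (V i) (V i'))
    (hc : ∀ k : Z, ∃ i, k ∈ V i)
    {M : Type*} [AddCommMonoid M] (f : Z → M) :
    ∑ i, ∑ k ∈ V i, f k = ∑ k, f k := by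
  rw [← Finset.sum_biUnion]
  · congr 1
    ext k
    simp only [Finset.mem_biUnion, Finset.mem_univ, true_and, true_iff]
    exact iff_true_intro (hc k)
  · intro i _ i' _ hne
    exact hd i i' hne

/-- for observation tests, if {a_i} does not exclude {b_j}
(via a test of positive maps {D_k} realizing the a_i and conditioned
post-processings {P^{(k)}_l} realizing the b_j), then there exists a single
joint observation test {c_ij} (positive effects) with marginals a_i and b_j,
i.e. the two observation tests are strongly compatible. -/
theorem obs_notExcludes_implies_strongCompat
    {n m p : ℕ} {X Y Z L : Type}
    [Fintype X] [Fintype Y] [Fintype Z] [Fintype L]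
    (a : X → (Fin n → ℝ) →ₗ[ℝ] ℝ) (b : Y → (Fin n → ℝ) →ₗ[ℝ] ℝ)
    (ha : ∑ i, a i = detEffect n) (hb : ∑ j, b j = detEffect n)
    (D : Z → (Fin n → ℝ) →ₗ[ℝ] (Fin m → ℝ))
    (hDpos : ∀ k, ∀ v : Fin n → ℝ, 0 ≤ v → 0 ≤ D k v)
    (V : X → Finset Z)
    (hVdisj : ∀ i i', i ≠ i' → Disjoint (V i) (V i'))
    (hVcover : ∀ k : Z, ∃ i, k ∈ V i)
    (haD : ∀ i, a i = (detEffect m).comp (∑ k ∈ V i, D k))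
    (P : Z → L → (Fin m → ℝ) →ₗ[ℝ] (Fin p → ℝ))
    (hPpos : ∀ k l, ∀ v : Fin m → ℝ, 0 ≤ v → 0 ≤ P k l v)
    (hPch : ∀ k, ∑ l, (detEffect p).comp (P k l) = detEffect m)
    (W : Y → Finset (Z × L))
    (hWdisj : ∀ j j', j ≠ j' → Disjoint (W j) (W j'))
    (hWcover : ∀ kl : Z × L, ∃ j, kl ∈ W j)
    (hbP : ∀ j, b j = ∑ kl ∈ W j, (detEffect p).comp ((P kl.1 kl.2).comp (D kl.1))) :
    ∃ c : X → Y → (Fin n → ℝ) →ₗ[ℝ] ℝ,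
      (∀ i j, ∀ v : Fin n → ℝ, 0 ≤ v → 0 ≤ c i j v) ∧
      (∀ i, a i = ∑ j, c i j) ∧
      (∀ j, b j = ∑ i, c i j) := by
  classical
  set f : Z → L → (Fin n → ℝ) →ₗ[ℝ] ℝ :=
    fun k l => (detEffect p).comp ((P k l).comp (D k)) with hf
  -- uniqueness of the W-block containing a given pair
  have hWuniq : ∀ (k : Z) (l : L) (j j' : Y), (k, l) ∈ W j → (k, l) ∈ W j' → j = j' := by
    intro k l j j' h h'
    by_contra hne
    exact Finset.disjoint_left.mp (hWdisj j j' hne) h h'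
  refine ⟨fun i j => ∑ k ∈ V i, ∑ l ∈ Finset.univ.filter (fun l => (k, l) ∈ W j), f k l,
    ?_, ?_, ?_⟩
  · intro i j v hv
    simp only [LinearMap.sum_apply]
    refine Finset.sum_nonneg fun k _ => Finset.sum_nonneg fun l _ => ?_
    exact detEffect_nonneg (hPpos k l _ (hDpos k v hv))
  · intro i
    have key : ∀ k : Z,
        ∑ j, ∑ l ∈ Finset.univ.filter (fun l => (k, l) ∈ W j), f k l = ∑ l, f k l := by
      intro k
      simp only [Finset.sum_filter]
      rw [Finset.sum_comm]
      refine Finset.sum_congr rfl fun l _ => ?_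
      obtain ⟨j0, hj0⟩ := hWcover (k, l)
      rw [Finset.sum_eq_single_of_mem j0 (Finset.mem_univ j0)]
      · simp [hj0]
      · intro j' _ hne
        simp only [ite_eq_right_iff]
        intro hmem
        exact absurd (hWuniq k l j' j0 hmem hj0) hne
    rw [Finset.sum_comm]
    calc a i = (detEffect m).comp (∑ k ∈ V i, D k) := haD i
      _ = ∑ k ∈ V i, (detEffect m).comp (D k) := by
          ext v; simp [LinearMap.sum_apply]
      _ = ∑ k ∈ V i, ∑ l, f k l := by
          refine Finset.sum_congr rfl fun k _ => ?_
          rw [← hPch k]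
          ext v; simp [hf, LinearMap.sum_apply]
      _ = ∑ k ∈ V i, ∑ j, ∑ l ∈ Finset.univ.filter (fun l => (k, l) ∈ W j), f k l := by
          refine Finset.sum_congr rfl fun k _ => (key k).symm
  · intro j
    rw [partition_sum V hVdisj hVcover, hbP j]
    simp only [Finset.sum_filter]
    rw [← Fintype.sum_prod_type (f := fun kl : Z × L => if kl ∈ W j then f kl.1 kl.2 else 0),
      Finset.sum_ite_mem, Finset.univ_inter]
end

section
/- In quantum theory there is no broadcasting channel for a qubit: there is no completely positive trace-preserving map D : M_2(ℂ) → M_2(ℂ)⊗M_2(ℂ) such that both partial traces of D(ρ) equal ρ for every density matrix ρ. Consequently, no two unitary (more generally, left-invertible) quantum channels with input M_2(ℂ) are strongly compatible. -/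
open scoped ComplexOrder

/-- Square complex matrices indexed by `α`. -/
abbrev Mat (α : Type) := Matrix α α ℂ

/-- Partial trace over the second tensor factor. -/
noncomputable def ptr2 {α β : Type} [Fintype β] (M : Mat (α × β)) : Mat α :=
  Matrix.of fun i j => ∑ k : β, M (i, k) (j, k)

/-- Partial trace over the first tensor factor. -/
noncomputable def ptr1 {α β : Type} [Fintype α] (M : Mat (α × β)) : Mat β :=
  Matrix.of fun i j => ∑ k : α, M (k, i) (k, j)

/-- The amplification `id_n ⊗ D` of a map on matrices, acting blockwise. -/
noncomputable def amp {α β : Type} (n : ℕ) (D : Mat α →ₗ[ℂ] Mat β)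
    (M : Mat (Fin n × α)) : Mat (Fin n × β) :=
  Matrix.of fun pq rs =>
    D (Matrix.of fun i j => M (pq.1, i) (rs.1, j)) pq.2 rs.2

/-- Complete positivity: all amplifications preserve positive semidefiniteness. -/
def IsCompletelyPositive {α β : Type} [Fintype α] [Fintype β]
    (D : Mat α →ₗ[ℂ] Mat β) : Prop :=
  ∀ (n : ℕ) (M : Mat (Fin n × α)), M.PosSemidef → (amp n D M).PosSemidef

/-- A quantum channel: completely positive and trace preserving. -/
def IsQChannel {α β : Type} [Fintype α] [Fintype β]
    (D : Mat α →ₗ[ℂ] Mat β) : Prop :=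
  IsCompletelyPositive D ∧ ∀ M : Mat α, (D M).trace = M.trace

/-- A left-invertible channel: some channel undoes it. -/
def QLeftInvertible {α β : Type} [Fintype α] [Fintype β]
    (V : Mat α →ₗ[ℂ] Mat β) : Prop :=
  ∃ Vt : Mat β →ₗ[ℂ] Mat α, IsQChannel Vt ∧ ∀ ρ : Mat α, Vt (V ρ) = ρ

/-!
If `D` broadcasts `|0⟩⟨0|`, both marginals of `D |0⟩⟨0|` are pure, so positivity forces its
diagonal entries at `|01⟩` and `|10⟩` to vanish; likewise for `|1⟩⟨1|`. As
`|0⟩⟨0| + |1⟩⟨1| = |+⟩⟨+| + |−⟩⟨−|` and `D` is positive, the diagonal entries of `D |+⟩⟨+|` at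
`|01⟩` and `|10⟩` vanish too. But then the marginal of `D |+⟩⟨+|` has no off-diagonal entry,
so it cannot be `|+⟩⟨+|`.

If `C` is a joint channel of `V` and `W` with left inverses `Ṽ` and `W̃`, then `(Ṽ ⊗ W̃) ∘ C`
is a positive broadcasting map.
-/

open Matrix

lemma Matrix.PosSemidef.apply_eq_zero_of_diag_eq_zero {𝕜 n : Type*} [RCLike 𝕜] [Fintype n]
    {A : Matrix n n 𝕜} (hA : A.PosSemidef) {i : n} (hi : A i i = 0) (j : n) :
    A i j = 0 ∧ A j i = 0 := by
  classical
  have hcol : A *ᵥ Pi.single i 1 = 0 :=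
    (hA.dotProduct_mulVec_zero_iff _).mp (by simpa [mulVec_single_one, dotProduct_single] using hi)
  have hji : A j i = 0 := by simpa [mulVec_single_one] using congrFun hcol j
  exact ⟨by rw [← hA.isHermitian.apply, hji, star_zero], hji⟩

lemma Matrix.PosSemidef.diag_eq_zero_of_add_left {𝕜 n : Type*} [RCLike 𝕜] [Fintype n]
    {A B : Matrix n n 𝕜} (hA : A.PosSemidef) (hB : B.PosSemidef) {i : n} (h : (A + B) i i = 0) :
    A i i = 0 :=
  ((add_eq_zero_iff_of_nonneg hA.diag_nonneg hB.diag_nonneg).mp h).1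

def IsPositiveMap {α β : Type} [Fintype α] [Fintype β] (Φ : Mat α →ₗ[ℂ] Mat β) : Prop :=
  ∀ ρ : Mat α, ρ.PosSemidef → (Φ ρ).PosSemidef

lemma IsCompletelyPositive.isPositiveMap {α β : Type} [Fintype α] [Fintype β]
    {Φ : Mat α →ₗ[ℂ] Mat β} (hΦ : IsCompletelyPositive Φ) : IsPositiveMap Φ := fun ρ hρ =>
  (hΦ 1 (ρ.submatrix Prod.snd Prod.snd) (hρ.submatrix _)).submatrix (Prod.mk 0)

section Marginals

variable {α β : Type}

lemma Matrix.PosSemidef.apply_eq_zero_of_ptr2_diag_eq_zero [Fintype α] [Fintype β]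
    {M : Mat (α × β)} (hM : M.PosSemidef) {i : α} (hi : ptr2 M i i = 0) (k : β) :
    M (i, k) (i, k) = 0 :=
  (Finset.sum_eq_zero_iff_of_nonneg fun _ _ => hM.diag_nonneg).mp hi k (Finset.mem_univ k)

lemma Matrix.PosSemidef.apply_eq_zero_of_ptr1_diag_eq_zero [Fintype α] [Fintype β]
    {M : Mat (α × β)} (hM : M.PosSemidef) {i : β} (hi : ptr1 M i i = 0) (k : α) :
    M (k, i) (k, i) = 0 :=
  (Finset.sum_eq_zero_iff_of_nonneg fun _ _ => hM.diag_nonneg).mp hi k (Finset.mem_univ k)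

lemma Matrix.PosSemidef.ptr2_apply_eq_zero [Fintype α] [Fintype β] {M : Mat (α × β)}
    (hM : M.PosSemidef) {i j : α} (h : ∀ k, M (i, k) (i, k) = 0 ∨ M (j, k) (j, k) = 0) :
    ptr2 M i j = 0 :=
  Finset.sum_eq_zero fun k _ => (h k).elim
    (fun hi => (hM.apply_eq_zero_of_diag_eq_zero hi _).1)
    (fun hj => (hM.apply_eq_zero_of_diag_eq_zero hj _).2)

lemma ptr1_submatrix_swap [Fintype β] (M : Mat (α × β)) :
    ptr1 (M.submatrix Prod.swap Prod.swap) = ptr2 M :=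
  rfl

lemma ptr2_submatrix_swap [Fintype α] (M : Mat (α × β)) :
    ptr2 (M.submatrix Prod.swap Prod.swap) = ptr1 M :=
  rfl

variable {n : ℕ} {Φ : Mat α →ₗ[ℂ] Mat β}

lemma ptr2_amp [Fintype α] [Fintype β] (hΦ : ∀ M, (Φ M).trace = M.trace) (M : Mat (Fin n × α)) :
    ptr2 (amp n Φ M) = ptr2 M := by
  ext p r
  exact hΦ (M.submatrix (Prod.mk p) (Prod.mk r))

lemma ptr1_amp (M : Mat (Fin n × α)) : ptr1 (amp n Φ M) = Φ (ptr1 M) := by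
  have h : ptr1 M = ∑ p : Fin n, M.submatrix (Prod.mk p) (Prod.mk p) := by
    ext i j
    simp [ptr1, Matrix.sum_apply]
  ext i j
  rw [h, map_sum, Matrix.sum_apply]
  rfl

variable (n Φ) in
noncomputable def ampLinear : Mat (Fin n × α) →ₗ[ℂ] Mat (Fin n × β) where
  toFun := amp n Φ
  map_add' M N := by
    ext pq rs
    exact congrFun₂ (map_add Φ (M.submatrix _ _) (N.submatrix _ _)) pq.2 rs.2
  map_smul' c M := by
    ext pq rs
    exact congrFun₂ (map_smul Φ c (M.submatrix _ _)) pq.2 rs.2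

end Marginals

noncomputable def ketBra {n : Type} (ψ : n → ℂ) : Mat n := vecMulVec ψ (star ψ)

lemma ketBra_apply {n : Type} (ψ : n → ℂ) (i j : n) : ketBra ψ i j = ψ i * star (ψ j) :=
  rfl

lemma posSemidef_ketBra {n : Type} [Fintype n] (ψ : n → ℂ) : (ketBra ψ).PosSemidef :=
  posSemidef_vecMulVec_self_star ψ

theorem no_positive_qubit_broadcasting :
    ¬ ∃ D : Mat (Fin 2) →ₗ[ℂ] Mat (Fin 2 × Fin 2), IsPositiveMap D ∧
      ∀ ρ : Mat (Fin 2), ρ.PosSemidef → ρ.trace = 1 → ptr2 (D ρ) = ρ ∧ ptr1 (D ρ) = ρ := by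
  rintro ⟨D, hpos, hbroad⟩
  let P0 := ketBra ![1, 0]
  let P1 := ketBra ![0, 1]
  let Pplus := (1 / 2 : ℂ) • ketBra ![1, 1]
  let Pminus := (1 / 2 : ℂ) • ketBra ![1, -1]
  have hP0 : P0.PosSemidef := posSemidef_ketBra _
  have hP1 : P1.PosSemidef := posSemidef_ketBra _
  have hPplus : Pplus.PosSemidef := (posSemidef_ketBra _).smul (by positivity)
  have hPminus : Pminus.PosSemidef := (posSemidef_ketBra _).smul (by positivity)
  have hsplit : D P0 + D P1 = D Pplus + D Pminus := by
    rw [← D.map_add, ← D.map_add]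
    congr 1
    ext i j
    fin_cases i <;> fin_cases j <;> norm_num [P0, P1, Pplus, Pminus, ketBra_apply]
  obtain ⟨h0₂, h0₁⟩ := hbroad P0 hP0 (by simp [P0, trace, ketBra_apply])
  obtain ⟨h1₂, h1₁⟩ := hbroad P1 hP1 (by simp [P1, trace, ketBra_apply])
  obtain ⟨hplus, -⟩ := hbroad Pplus hPplus (by norm_num [Pplus, trace, ketBra_apply])
  have hdiag (x : Fin 2 × Fin 2) (hx0 : D P0 x x = 0) (hx1 : D P1 x x = 0) :
      D Pplus x x = 0 :=
    (hpos _ hPplus).diag_eq_zero_of_add_left (hpos _ hPminus)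
      (by rw [← hsplit, Matrix.add_apply, hx0, hx1, add_zero])
  have h01 : D Pplus (0, 1) (0, 1) = 0 :=
    hdiag _ ((hpos _ hP0).apply_eq_zero_of_ptr1_diag_eq_zero (by simp [h0₁, P0, ketBra_apply]) 0)
      ((hpos _ hP1).apply_eq_zero_of_ptr2_diag_eq_zero (by simp [h1₂, P1, ketBra_apply]) 1)
  have h10 : D Pplus (1, 0) (1, 0) = 0 :=
    hdiag _ ((hpos _ hP0).apply_eq_zero_of_ptr2_diag_eq_zero (by simp [h0₂, P0, ketBra_apply]) 0)
      ((hpos _ hP1).apply_eq_zero_of_ptr1_diag_eq_zero (by simp [h1₁, P1, ketBra_apply]) 1)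
  have hcoh : ptr2 (D Pplus) 0 1 = 0 :=
    (hpos _ hPplus).ptr2_apply_eq_zero fun k => by
      fin_cases k
      exacts [Or.inr h10, Or.inl h01]
  rw [hplus] at hcoh
  norm_num [Pplus, ketBra_apply] at hcoh

theorem exists_positive_broadcasting_of_strongCompat {n b c : ℕ}
    {V : Mat (Fin n) →ₗ[ℂ] Mat (Fin b)} {W : Mat (Fin n) →ₗ[ℂ] Mat (Fin c)}
    (hV : QLeftInvertible V) (hW : QLeftInvertible W) (C : Mat (Fin n) →ₗ[ℂ] Mat (Fin b × Fin c))
    (hC : IsPositiveMap C) (hCV : ∀ ρ, ptr2 (C ρ) = V ρ) (hCW : ∀ ρ, ptr1 (C ρ) = W ρ) :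
    ∃ D : Mat (Fin n) →ₗ[ℂ] Mat (Fin n × Fin n),
      IsPositiveMap D ∧ ∀ ρ, ptr2 (D ρ) = ρ ∧ ptr1 (D ρ) = ρ := by
  obtain ⟨Vt, ⟨hVt, hVt_tr⟩, hVtV⟩ := hV
  obtain ⟨Wt, ⟨hWt, hWt_tr⟩, hWtW⟩ := hW
  let swap : Mat (Fin b × Fin n) ≃ₗ[ℂ] Mat (Fin n × Fin b) :=
    reindexLinearEquiv ℂ ℂ (Equiv.prodComm _ _) (Equiv.prodComm _ _)
  refine ⟨ampLinear n Vt ∘ₗ swap.toLinearMap ∘ₗ ampLinear b Wt ∘ₗ C, fun ρ hρ => ?_,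
    fun ρ => ⟨?_, ?_⟩⟩
  · exact hVt n _ ((hWt b _ (hC ρ hρ)).submatrix _)
  · show ptr2 (amp n Vt ((amp b Wt (C ρ)).submatrix Prod.swap Prod.swap)) = ρ
    rw [ptr2_amp hVt_tr, ptr2_submatrix_swap, ptr1_amp, hCW, hWtW]
  · show ptr1 (amp n Vt ((amp b Wt (C ρ)).submatrix Prod.swap Prod.swap)) = ρ
    rw [ptr1_amp, ptr1_submatrix_swap, ptr2_amp hWt_tr, hCV, hVtV]

/-- there is no broadcasting channel for a qubit, and consequently
no two left-invertible channels with qubit input are strongly compatible. -/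
theorem no_qubit_broadcasting_and_no_strongCompat_leftInvertible :
    (¬ ∃ D : Mat (Fin 2) →ₗ[ℂ] Mat (Fin 2 × Fin 2),
        IsQChannel D ∧
        ∀ ρ : Mat (Fin 2), ρ.PosSemidef → ρ.trace = 1 →
          ptr2 (D ρ) = ρ ∧ ptr1 (D ρ) = ρ) ∧
    (∀ (b c : ℕ)
        (V : Mat (Fin 2) →ₗ[ℂ] Mat (Fin b))
        (W : Mat (Fin 2) →ₗ[ℂ] Mat (Fin c)),
      IsQChannel V → IsQChannel W →
      QLeftInvertible V → QLeftInvertible W →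
      ¬ ∃ C : Mat (Fin 2) →ₗ[ℂ] Mat (Fin b × Fin c),
          IsQChannel C ∧ (∀ ρ, ptr2 (C ρ) = V ρ) ∧ (∀ ρ, ptr1 (C ρ) = W ρ)) := by
  refine ⟨fun ⟨D, hD, hbroad⟩ =>
    no_positive_qubit_broadcasting ⟨D, hD.1.isPositiveMap, hbroad⟩, ?_⟩
  rintro b c V W - - hV hW ⟨C, hC, hCV, hCW⟩
  obtain ⟨D, hD, hbroad⟩ :=
    exists_positive_broadcasting_of_strongCompat hV hW C hC.1.isPositiveMap hCV hCW
  exact no_positive_qubit_broadcasting ⟨D, hD, fun ρ _ _ => hbroad ρ⟩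
end

section
/- Any two channels that admit left-reversible dilations are weakly compatible. Precisely: if channels A : A → B and B : A → C can be written as A = (id_B ⊗ e_{B̃})∘V and B = (id_C ⊗ e_{C̃})∘W with V : A → B⊗B̃ and W : A → C⊗C̃ left-invertible channels, then A does not exclude B (via realizing V and post-processing with W∘Ṽ, where Ṽ is a left-inverse of V) and B does not exclude A; hence A and B are weakly compatible. -/
/-- An abstract operational probabilistic theory: objects (systems), morphisms
(transformations) with coarse-graining (addition), sequential composition,
parallel composition, a unit system with discard effects `e`, marginalization
maps (discarding one output wire), and a swap compatible with marginals. -/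
structure OPT where
  Obj : Type
  Hom : Obj → Obj → Type
  homAdd : ∀ X Y : Obj, AddCommMonoid (Hom X Y)
  id : ∀ X : Obj, Hom X X
  comp : ∀ {X Y Z : Obj}, Hom X Y → Hom Y Z → Hom X Z
  id_comp : ∀ {X Y : Obj} (f : Hom X Y), comp (id X) f = f
  comp_id : ∀ {X Y : Obj} (f : Hom X Y), comp f (id Y) = f
  comp_assoc : ∀ {X Y Z W : Obj} (f : Hom X Y) (g : Hom Y Z) (h : Hom Z W),
    comp (comp f g) h = comp f (comp g h)
  unit : Obj
  tens : Obj → Obj → Obj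
  tensHom : ∀ {X X' Y Y' : Obj}, Hom X Y → Hom X' Y' → Hom (tens X X') (tens Y Y')
  tens_id : ∀ X Y : Obj, tensHom (id X) (id Y) = id (tens X Y)
  tens_comp : ∀ {X X' Y Y' Z Z' : Obj} (f : Hom X Y) (g : Hom Y Z)
    (f' : Hom X' Y') (g' : Hom Y' Z'),
    tensHom (comp f g) (comp f' g') = comp (tensHom f f') (tensHom g g')
  e : ∀ X : Obj, Hom X unit
  e_unit : e unit = id unit
  margL : ∀ {A X Y : Obj}, Hom A (tens X Y) → Hom A X
  margR : ∀ {A X Y : Obj}, Hom A (tens X Y) → Hom A Y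
  margL_comp : ∀ {A B X Y : Obj} (g : Hom A B) (f : Hom B (tens X Y)),
    margL (comp g f) = comp g (margL f)
  margR_comp : ∀ {A B X Y : Obj} (g : Hom A B) (f : Hom B (tens X Y)),
    margR (comp g f) = comp g (margR f)
  swap : ∀ X Y : Obj, Hom (tens X Y) (tens Y X)
  margL_swap : ∀ {A X Y : Obj} (f : Hom A (tens X Y)),
    margL (comp f (swap X Y)) = margR f
  margR_swap : ∀ {A X Y : Obj} (f : Hom A (tens X Y)),
    margR (comp f (swap X Y)) = margL f
  tens_e : ∀ {X X' Y Y' : Obj} (f : Hom X Y) (f' : Hom X' Y'),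
    comp f (e Y) = e X → comp f' (e Y') = e X' →
    comp (tensHom f f') (e (tens Y Y')) = e (tens X X')
  margL_e : ∀ {A X Y : Obj} (f : Hom A (tens X Y)),
    comp f (e (tens X Y)) = e A → comp (margL f) (e X) = e A
  margR_e : ∀ {A X Y : Obj} (f : Hom A (tens X Y)),
    comp f (e (tens X Y)) = e A → comp (margR f) (e Y) = e A
  runit : ∀ X : Obj, Hom (tens X unit) X
  runitInv : ∀ X : Obj, Hom X (tens X unit)
  runit_inv : ∀ X : Obj, comp (runitInv X) (runit X) = id X
  inv_runit : ∀ X : Obj, comp (runit X) (runitInv X) = id (tens X unit)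

namespace OPT

variable (T : OPT)

instance (X Y : T.Obj) : AddCommMonoid (T.Hom X Y) := T.homAdd X Y

/-- A transformation is a channel (deterministic) if it preserves the discard effect. -/
def IsChannel {X Y : T.Obj} (f : T.Hom X Y) : Prop := T.comp f (T.e Y) = T.e X

/-- A transformation is left-invertible if some channel undoes it. -/
def LeftInvertible {X Y : T.Obj} (f : T.Hom X Y) : Prop :=
  ∃ g : T.Hom Y X, T.IsChannel g ∧ T.comp f g = T.id X

end OPT

/-- Channel `f` does not exclude channel `g`: some channel dilation of `f` may be
post-processed by a channel into a dilation of `g`. -/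
def ChanNotExcludes (T : OPT) {A B C : T.Obj} (f : T.Hom A B) (g : T.Hom A C) : Prop :=
  ∃ (B' C' : T.Obj) (C0 : T.Hom A (T.tens B B'))
    (P : T.Hom (T.tens B B') (T.tens C C')),
    T.IsChannel C0 ∧ T.IsChannel P ∧
    T.margL C0 = f ∧ T.margL (T.comp C0 P) = g

theorem chanNotExcludes_aux (T : OPT) {A B C Bt Ct : T.Obj}
    (f : T.Hom A B) (g : T.Hom A C)
    (V : T.Hom A (T.tens B Bt)) (W : T.Hom A (T.tens C Ct))
    (hV : T.IsChannel V) (hW : T.IsChannel W)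
    (hVli : T.LeftInvertible V)
    (hf : f = T.margL V) (hg : g = T.margL W) :
    ChanNotExcludes T f g := by
  obtain ⟨Vt, hVtChan, hVt⟩ := hVli
  refine ⟨Bt, Ct, V, T.comp Vt W, hV, ?_, hf.symm, ?_⟩
  · show T.comp (T.comp Vt W) _ = _
    rw [T.comp_assoc, hW, hVtChan]
  · rw [← T.comp_assoc, hVt, T.id_comp, hg]

/-- any two channels admitting left-reversible dilations are weakly
compatible. -/
theorem weakCompat_of_leftReversible_dilations
    (T : OPT) {A B C Bt Ct : T.Obj}
    (f : T.Hom A B) (g : T.Hom A C)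
    (V : T.Hom A (T.tens B Bt)) (W : T.Hom A (T.tens C Ct))
    (hV : T.IsChannel V) (hW : T.IsChannel W)
    (hVli : T.LeftInvertible V) (hWli : T.LeftInvertible W)
    (hf : f = T.margL V) (hg : g = T.margL W) :
    ChanNotExcludes T f g ∧ ChanNotExcludes T g f := by
  exact ⟨chanNotExcludes_aux T f g V W hV hW hVli hf hg,
         chanNotExcludes_aux T g f W V hW hV hWli hg hf⟩
end

section
/- In a theory where the identity on some system admits a nontrivial orthogonal decomposition {A_i}_{i∈X} with each range containing a nonzero state and where every nonzero state is proportional to a deterministic one, for each n there exist m^n deterministic states {ρ_s}_{s∈X^n} of A^{⊗n} and an observation test {a_s}_{s∈X^n} with a_s(ρ_{s'}) = δ_{ss'}; hence the theory has systems with arbitrarily many perfectly discriminable states. -/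
open scoped TensorProduct

noncomputable def tensEffect {V : Type} [AddCommGroup V] [Module ℝ V]
    (e : V →ₗ[ℝ] ℝ) (n : ℕ) : (⨂[ℝ] _ : Fin n, V) →ₗ[ℝ] ℝ :=
  PiTensorProduct.lift
    ((MultilinearMap.mkPiAlgebra ℝ (Fin n) ℝ).compLinearMap fun _ => e)

lemma tensEffect_tprod {V : Type} [AddCommGroup V] [Module ℝ V]
    (e : V →ₗ[ℝ] ℝ) (n : ℕ) (v : Fin n → V) :
    tensEffect e n (PiTensorProduct.tprod ℝ v) = ∏ t, e (v t) := by
  simp [tensEffect]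

/-- in a theory where the identity of some system has a nontrivial
orthogonal decomposition {A_i}_{i∈X} (|X| = m ≥ 2) with a nonzero state in each
block, and all nonzero states are proportional to deterministic ones, for every
n there are m^n deterministic product states of A^{⊗n} perfectly discriminated
by the observation test a_s := e∘(A_{s 0} ⊗ ⋯ ⊗ A_{s (n-1)}): arbitrarily many
perfectly discriminable states. -/
theorem arbitrarily_many_discriminable_states
    {V : Type} [AddCommGroup V] [Module ℝ V] [FiniteDimensional ℝ V]
    {X : Type} [Fintype X] [DecidableEq X] {m : ℕ}
    (hcard : Fintype.card X = m) (hm : 2 ≤ m)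
    (St : Set V) (e : V →ₗ[ℝ] ℝ)
    (hscale : ∀ ρ ∈ St, ∀ c : ℝ, 0 ≤ c → c • ρ ∈ St)
    (hpos : ∀ ρ ∈ St, ρ ≠ 0 → 0 < e ρ)
    (A : X → V →ₗ[ℝ] V)
    (horth : ∀ i j, i ≠ j → (A i).comp (A j) = 0)
    (hidem : ∀ i, (A i).comp (A i) = A i)
    (hsum : ∑ i, A i = LinearMap.id)
    (hmapSt : ∀ i, ∀ ρ ∈ St, A i ρ ∈ St)
    (hblock : ∀ i, ∃ ρ ∈ St, A i ρ ≠ 0) :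
    ∀ n : ℕ,
      (∑ s : Fin n → X,
          (tensEffect e n).comp (PiTensorProduct.map fun t => A (s t)))
        = tensEffect e n ∧
      ∃ ρ : (Fin n → X) → ⨂[ℝ] _ : Fin n, V,
        (∀ s, ∃ σ : Fin n → V, (∀ t, σ t ∈ St) ∧
          ρ s = PiTensorProduct.tprod ℝ σ) ∧
        (∀ s, tensEffect e n (ρ s) = 1) ∧
        (∀ s s' : Fin n → X,
          tensEffect e n ((PiTensorProduct.map fun t => A (s t)) (ρ s'))
            = if s = s' then 1 else 0) := by
  -- choose for each block a deterministic state in range of A i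
  choose τ hτSt hτne using hblock
  set σ : X → V := fun i => (e (A i (τ i)))⁻¹ • A i (τ i) with hσdef
  have hApos : ∀ i, 0 < e (A i (τ i)) := fun i =>
    hpos _ (hmapSt i _ (hτSt i)) (hτne i)
  have hσSt : ∀ i, σ i ∈ St := fun i =>
    hscale _ (hmapSt i _ (hτSt i)) _ (inv_nonneg.mpr (hApos i).le)
  have heσ : ∀ i, e (σ i) = 1 := fun i => by
    simp [hσdef, inv_mul_cancel₀ (hApos i).ne']
  have hAσ : ∀ j i, A j (σ i) = if j = i then σ i else 0 := by
    intro j i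
    by_cases h : j = i
    · subst h
      simp only [hσdef, map_smul, if_pos rfl]
      congr 1
      exact LinearMap.congr_fun (hidem j) (τ j)
    · simp only [hσdef, map_smul, if_neg h]
      have := LinearMap.congr_fun (horth j i h) (τ i)
      simp only [LinearMap.comp_apply, LinearMap.zero_apply] at this
      rw [this, smul_zero]
  have heAσ : ∀ j i, e (A j (σ i)) = if j = i then 1 else 0 := by
    intro j i; rw [hAσ]
    by_cases h : j = i <;> simp [h, heσ]
  intro n
  constructor
  · -- sum of effects is the deterministic effect
    apply LinearMap.ext
    have : ∀ v : Fin n → V,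
        (∑ s : Fin n → X,
          (tensEffect e n).comp (PiTensorProduct.map fun t => A (s t)))
          (PiTensorProduct.tprod ℝ v) = tensEffect e n (PiTensorProduct.tprod ℝ v) := by
      intro v
      simp only [LinearMap.sum_apply, LinearMap.comp_apply, PiTensorProduct.map_tprod,
        tensEffect_tprod]
      have key : ∀ t : Fin n, e (v t) = ∑ i, e (A i (v t)) := by
        intro t
        have : (∑ i, A i) (v t) = v t := by rw [hsum]; rfl
        conv_lhs => rw [← this]
        rw [LinearMap.sum_apply, map_sum]
      conv_rhs => rw [Finset.prod_congr rfl (fun t _ => key t)]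
      rw [Finset.prod_univ_sum]
      rw [show (Fintype.piFinset fun _ : Fin n => (Finset.univ : Finset X)) =
        Finset.univ from Fintype.piFinset_univ]
    -- extend from tprod to all by ext
    intro x
    induction x using PiTensorProduct.induction_on with
    | smul_tprod c v => simp [this v]
    | add x y hx hy =>
        simp only [map_add, LinearMap.sum_apply, LinearMap.comp_apply] at hx hy ⊢
        rw [hx, hy]
  · refine ⟨fun s => PiTensorProduct.tprod ℝ (fun t => σ (s t)),
      fun s => ⟨fun t => σ (s t), fun t => hσSt _, rfl⟩, fun s => ?_, fun s s' => ?_⟩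
    · simp [tensEffect_tprod, heσ]
    · rw [PiTensorProduct.map_tprod, tensEffect_tprod]
      rw [Finset.prod_congr rfl (fun t _ => heAσ (s t) (s' t))]
      by_cases h : s = s'
      · simp [h]
      · obtain ⟨t, ht⟩ := Function.ne_iff.mp h
        rw [if_neg h]
        exact Finset.prod_eq_zero (Finset.mem_univ t) (if_neg ht)
end

section
/- For a nonzero linear functional a on V that is atomic in the effect cone and a complete orthogonal idempotent family {B_j}_{j∈Y} (B_jB_{j'} = δ_{jj'}B_j, Σ_j B_j = id_V) such that each a∘B_j is again an effect, there exists a unique j̄ ∈ Y with a∘B_{j̄} = a and a∘B_j = 0 for all j ≠ j̄. -/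
/-!
Each `a ∘ B j` is an effect and they sum to `a`, so atomicity makes each one a multiple `c j • a`.
Idempotence of `B j` forces `c j ∈ {0, 1}`, and `∑ B j = id` forces `∑ c j = 1`; hence exactly one
coefficient equals `1` and all the others vanish.
-/

open Finset

section Atomic

variable {R M : Type*} [Semiring R] [PartialOrder R] [AddCommMonoid M] [Module R M]

variable (R) in
def IsAtomicIn (K : Set M) (a : M) : Prop :=
  ∀ (n : ℕ) (ak : Fin n → M), (∀ k, ak k ∈ K) → ∑ k, ak k = a → ∀ k, ∃ c : R, 0 ≤ c ∧ ak k = c • a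

theorem IsAtomicIn.exists_smul_of_sum_eq {K : Set M} {a : M} (hatomic : IsAtomicIn R K a)
    {ι : Type*} [Fintype ι] {f : ι → M} (hf : ∀ i, f i ∈ K) (hsum : ∑ i, f i = a) (i : ι) :
    ∃ c : R, 0 ≤ c ∧ f i = c • a := by
  let e := Fintype.equivFin ι
  have hsum' : ∑ k, f (e.symm k) = a := (e.symm.sum_comp f).trans hsum
  simpa using hatomic _ (f ∘ e.symm) (fun k => hf _) hsum' (e i)

end Atomic

theorem existsUnique_eq_one_of_sum_eq_one {R ι : Type*} [CommRing R] [LinearOrder R]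
    [IsStrictOrderedRing R] [Fintype ι] {c : ι → R} (h01 : ∀ i, c i = 0 ∨ c i = 1)
    (hsum : ∑ i, c i = 1) : ∃! i, c i = 1 ∧ ∀ j, j ≠ i → c j = 0 := by
  have hnonneg : ∀ i ∈ univ, 0 ≤ c i := fun i _ => by rcases h01 i with h | h <;> simp [h]
  obtain ⟨i₀, hi₀⟩ : ∃ i, c i = 1 := by
    by_contra! hne
    have : ∑ i, c i = 0 := sum_eq_zero fun i _ => (h01 i).resolve_right (hne i)
    exact zero_ne_one (this.symm.trans hsum)
  have hothers : ∀ j, j ≠ i₀ → c j = 0 := by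
    intro j hj
    refine (h01 j).resolve_right fun hj1 => ?_
    have := add_le_sum hnonneg (mem_univ i₀) (mem_univ j) hj.symm
    rw [hi₀, hj1, hsum] at this
    linarith
  refine ⟨i₀, ⟨hi₀, hothers⟩, fun i₁ ⟨_, hi₁⟩ => ?_⟩
  by_contra hne
  exact zero_ne_one ((hi₁ i₀ (Ne.symm hne)).symm.trans hi₀)

section Module

variable {𝕜 M : Type*} [Field 𝕜] [AddCommGroup M] [Module 𝕜 M] {m : M}

theorem smul_eq_self_iff_of_ne_zero (hm : m ≠ 0) {c : 𝕜} : c • m = m ↔ c = 1 := by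
  conv_lhs => rhs; rw [← one_smul 𝕜 m]
  exact (smul_left_injective 𝕜 hm).eq_iff

theorem sum_eq_one_of_sum_smul_eq_self (hm : m ≠ 0) {ι : Type*} [Fintype ι] {c : ι → 𝕜}
    (hsum : ∑ j, c j • m = m) : ∑ j, c j = 1 := by
  rwa [← sum_smul, smul_eq_self_iff_of_ne_zero hm] at hsum

end Module

namespace LinearMap

variable {𝕜 V : Type*} [Field 𝕜] [AddCommGroup V] [Module 𝕜 V] {a : V →ₗ[𝕜] 𝕜}

theorem sum_comp_eq_self_of_sum_eq_id {ι : Type*} [Fintype ι] {B : ι → V →ₗ[𝕜] V}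
    (hsum : ∑ j, B j = id) : ∑ j, a.comp (B j) = a :=
  (map_sum (compRight 𝕜 a) B univ).symm.trans (congrArg a.comp hsum)

theorem isIdempotentElem_of_comp_eq_smul (ha : a ≠ 0) {f : V →ₗ[𝕜] V}
    (hf : f.comp f = f) {c : 𝕜} (hc : a.comp f = c • a) : IsIdempotentElem c := by
  apply smul_left_injective 𝕜 ha
  calc (c * c) • a = (c • a).comp f := by rw [mul_smul, smul_comp, hc]
    _ = (a.comp f).comp f := by rw [hc]
    _ = c • a := by rw [comp_assoc, hf, hc]

end LinearMap

theorem atomic_effect_unique_block_general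
    {V : Type} [AddCommGroup V] [Module ℝ V]
    {Y : Type} [Fintype Y]
    (B : Y → V →ₗ[ℝ] V)
    (hidem : ∀ j, (B j).comp (B j) = B j)
    (hsum : ∑ j, B j = LinearMap.id)
    (K : Set (V →ₗ[ℝ] ℝ))
    (hKclosed : ∀ c ∈ K, ∀ j, c.comp (B j) ∈ K)
    (a : V →ₗ[ℝ] ℝ) (haK : a ∈ K) (ha0 : a ≠ 0)
    (hatomic : ∀ (n : ℕ) (ak : Fin n → V →ₗ[ℝ] ℝ),
      (∀ k, ak k ∈ K) → ∑ k, ak k = a →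
      ∀ k, ∃ c : ℝ, 0 ≤ c ∧ ak k = c • a) :
    ∃! j0 : Y, a.comp (B j0) = a ∧ ∀ j, j ≠ j0 → a.comp (B j) = 0 := by
  have hdecomp : ∑ j, a.comp (B j) = a := LinearMap.sum_comp_eq_self_of_sum_eq_id hsum
  choose c _ hc using IsAtomicIn.exists_smul_of_sum_eq (R := ℝ) hatomic
    (fun j => hKclosed a haK j) hdecomp
  have h01 : ∀ j, c j = 0 ∨ c j = 1 := fun j =>
    IsIdempotentElem.iff_eq_zero_or_one.mp
      (LinearMap.isIdempotentElem_of_comp_eq_smul ha0 (hidem j) (hc j))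
  have hcsum : ∑ j, c j = 1 :=
    sum_eq_one_of_sum_smul_eq_self ha0 (by simpa only [hc] using hdecomp)
  simpa only [hc, smul_eq_self_iff_of_ne_zero ha0, smul_eq_zero, ha0, or_false] using
    existsUnique_eq_one_of_sum_eq_one h01 hcsum

/-- for a nonzero atomic effect a in an effect cone K closed
under precomposition with a complete orthogonal idempotent family {B_j}, there
is a unique j̄ with a∘B_{j̄} = a and a∘B_j = 0 for all j ≠ j̄. -/
theorem atomic_effect_unique_block
    {V : Type} [AddCommGroup V] [Module ℝ V] [FiniteDimensional ℝ V]
    {Y : Type} [Fintype Y]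
    (B : Y → V →ₗ[ℝ] V)
    (horth : ∀ j j', j ≠ j' → (B j).comp (B j') = 0)
    (hidem : ∀ j, (B j).comp (B j) = B j)
    (hsum : ∑ j, B j = LinearMap.id)
    (K : Set (V →ₗ[ℝ] ℝ))
    (hKclosed : ∀ c ∈ K, ∀ j, c.comp (B j) ∈ K)
    (a : V →ₗ[ℝ] ℝ) (haK : a ∈ K) (ha0 : a ≠ 0)
    (hatomic : ∀ (n : ℕ) (ak : Fin n → V →ₗ[ℝ] ℝ),
      (∀ k, ak k ∈ K) → ∑ k, ak k = a →
      ∀ k, ∃ c : ℝ, 0 ≤ c ∧ ak k = c • a) :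
    ∃! j0 : Y, a.comp (B j0) = a ∧ ∀ j, j ≠ j0 → a.comp (B j) = 0 :=
  atomic_effect_unique_block_general B hidem hsum K hKclosed a haK ha0 hatomic
end
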